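/- arXiv:1203.0095 — 5 statements merged into one kernel-verified Lean document; each statement's English description precedes it below -/
import Mathlib

section
/- The function β : ℝ → ℝ defined implicitly by ∑_{i=1}^N p_i^q r_i^{β(q)} = 1 is strictly decreasing and satisfies β(1) = 0. -/
theorem beta_strictAnti_and_beta_one (N : ℕ) (hN : 1 ≤ N) (p r : Fin N → ℝ)
    (hp : ∀ i, p i ∈ Set.Ioo (0:ℝ) 1) (hpsum : ∑ i, p i = 1)
    (hr : ∀ i, r i ∈ Set.Ioo (0:ℝ) 1)
    (β : ℝ → ℝ) (hβ : ∀ q, ∑ i, p i ^ q * r i ^ β q = 1) :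
    StrictAnti β ∧ β 1 = 0 := by
  have hne : Nonempty (Fin N) := Fin.pos_iff_nonempty.mp hN
  have huniv : (Finset.univ : Finset (Fin N)).Nonempty := Finset.univ_nonempty
  have key : ∀ q a b : ℝ, a < b →
      ∑ i, p i ^ q * r i ^ b < ∑ i, p i ^ q * r i ^ a := by
    intro q a b hab
    refine Finset.sum_lt_sum_of_nonempty huniv fun i _ => ?_
    exact mul_lt_mul_of_pos_left
      (Real.rpow_lt_rpow_of_exponent_gt (hr i).1 (hr i).2 hab)
      (Real.rpow_pos_of_pos (hp i).1 q)
  have key2 : ∀ b q1 q2 : ℝ, q1 < q2 →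
      ∑ i, p i ^ q2 * r i ^ b < ∑ i, p i ^ q1 * r i ^ b := by
    intro b q1 q2 h
    refine Finset.sum_lt_sum_of_nonempty huniv fun i _ => ?_
    exact mul_lt_mul_of_pos_right
      (Real.rpow_lt_rpow_of_exponent_gt (hp i).1 (hp i).2 h)
      (Real.rpow_pos_of_pos (hr i).1 b)
  constructor
  · intro q1 q2 h
    by_contra hle
    push_neg at hle
    have step1 : ∑ i, p i ^ q2 * r i ^ β q2 ≤ ∑ i, p i ^ q2 * r i ^ β q1 := by
      refine Finset.sum_le_sum fun i _ => ?_
      refine mul_le_mul_of_nonneg_left ?_ (Real.rpow_pos_of_pos (hp i).1 q2).le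
      exact Real.rpow_le_rpow_of_exponent_ge (hr i).1 (hr i).2.le hle
    have := key2 (β q1) q1 q2 h
    have h1 := hβ q1
    have h2 := hβ q2
    linarith
  · by_contra h
    rcases lt_or_gt_of_ne h with hlt | hgt
    · have := key 1 (β 1) 0 hlt
      have h1 := hβ 1
      have h0 : ∑ i, p i ^ (1:ℝ) * r i ^ (0:ℝ) = 1 := by
        simpa [Real.rpow_one, Real.rpow_zero] using hpsum
      linarith
    · have := key 1 0 (β 1) hgt
      have h1 := hβ 1
      have h0 : ∑ i, p i ^ (1:ℝ) * r i ^ (0:ℝ) = 1 := by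
        simpa [Real.rpow_one, Real.rpow_zero] using hpsum
      linarith
end

section
/- The function β : ℝ → ℝ defined implicitly by ∑_{i=1}^N p_i^q r_i^{β(q)} = 1 is convex. -/
theorem beta_convex (N : ℕ) (hN : 1 ≤ N) (p r : Fin N → ℝ)
    (hp : ∀ i, p i ∈ Set.Ioo (0:ℝ) 1) (hpsum : ∑ i, p i = 1)
    (hr : ∀ i, r i ∈ Set.Ioo (0:ℝ) 1)
    (β : ℝ → ℝ) (hβ : ∀ q, ∑ i, p i ^ q * r i ^ β q = 1) :
    ConvexOn ℝ Set.univ β := by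
  refine ⟨convex_univ, fun x _ y _ a b ha hb hab => ?_⟩
  simp only [smul_eq_mul]
  set q := a * x + b * y with hq
  set c := a * β x + b * β y with hc
  have h1 : ∀ i, p i ^ q * r i ^ c
      = (p i ^ x * r i ^ β x) ^ a * (p i ^ y * r i ^ β y) ^ b := by
    intro i
    obtain ⟨hpi, _⟩ := hp i
    obtain ⟨hri, _⟩ := hr i
    rw [Real.mul_rpow (by positivity) (by positivity),
        Real.mul_rpow (by positivity) (by positivity),
        ← Real.rpow_mul hpi.le, ← Real.rpow_mul hri.le,
        ← Real.rpow_mul hpi.le, ← Real.rpow_mul hri.le,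
        hq, hc, Real.rpow_add hpi, Real.rpow_add hri,
        mul_comm x a, mul_comm y b, mul_comm (β x) a, mul_comm (β y) b]
    ring
  have key : ∑ i, p i ^ q * r i ^ c ≤ 1 := by
    calc ∑ i, p i ^ q * r i ^ c
        = ∑ i, (p i ^ x * r i ^ β x) ^ a * (p i ^ y * r i ^ β y) ^ b := by
          simp_rw [h1]
      _ ≤ ∑ i, (a * (p i ^ x * r i ^ β x) + b * (p i ^ y * r i ^ β y)) := by
          apply Finset.sum_le_sum
          intro i _
          have hpi := (hp i).1
          have hri := (hr i).1
          exact Real.geom_mean_le_arith_mean2_weighted ha hb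
            (by positivity) (by positivity) hab
      _ = 1 := by
          rw [Finset.sum_add_distrib, ← Finset.mul_sum, ← Finset.mul_sum,
            hβ x, hβ y]
          simpa using hab
  by_contra hlt
  push_neg at hlt
  have hne : (Finset.univ : Finset (Fin N)).Nonempty := by
    have : Nonempty (Fin N) := ⟨⟨0, hN⟩⟩
    exact Finset.univ_nonempty
  have hcontr : (1:ℝ) < 1 := by
    calc (1:ℝ) = ∑ i, p i ^ q * r i ^ β q := (hβ q).symm
      _ < ∑ i, p i ^ q * r i ^ c := by
          apply Finset.sum_lt_sum_of_nonempty hne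
          intro i _
          have h := Real.rpow_lt_rpow_of_exponent_gt (hr i).1 (hr i).2 hlt
          exact mul_lt_mul_of_pos_left h (Real.rpow_pos_of_pos (hp i).1 q)
      _ ≤ 1 := key
  exact absurd hcontr (lt_irrefl 1)
end

section
/- For every α in the closed interval [α_min, α_max], where α_min = min_i (log p_i / log r_i) and α_max = max_i (log p_i / log r_i), the Legendre transform β*(α) = inf_q (αq + β(q)) is nonnegative. -/
theorem legendre_nonneg_on_interval (N : ℕ) (hN : 1 ≤ N) (p r : Fin N → ℝ)
    (hp : ∀ i, p i ∈ Set.Ioo (0:ℝ) 1) (hpsum : ∑ i, p i = 1)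
    (hr : ∀ i, r i ∈ Set.Ioo (0:ℝ) 1)
    (β : ℝ → ℝ) (hβ : ∀ q, ∑ i, p i ^ q * r i ^ β q = 1)
    (α : ℝ)
    (hα : α ∈ Set.Icc (⨅ i, Real.log (p i) / Real.log (r i))
      (⨆ i, Real.log (p i) / Real.log (r i))) :
    0 ≤ sInf (Set.range fun q : ℝ => α * q + β q) := by
  apply Real.sInf_nonneg
  rintro x ⟨q, rfl⟩
  simp only
  by_contra hneg
  push_neg at hneg
  have hNe : Nonempty (Fin N) := ⟨⟨0, hN⟩⟩
  obtain ⟨i, hi⟩ : ∃ i : Fin N, Real.log (p i) / Real.log (r i) * q + β q < 0 := by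
    rcases le_or_gt 0 q with hq | hq
    · obtain ⟨i0, hi0⟩ := Finite.exists_min (fun i => Real.log (p i) / Real.log (r i))
      refine ⟨i0, ?_⟩
      have h1 : (Real.log (p i0) / Real.log (r i0)) ≤ α := le_trans (le_ciInf hi0) hα.1
      have h2 : (Real.log (p i0) / Real.log (r i0)) * q ≤ α * q :=
        mul_le_mul_of_nonneg_right h1 hq
      linarith
    · obtain ⟨i1, hi1⟩ := Finite.exists_max (fun i => Real.log (p i) / Real.log (r i))
      refine ⟨i1, ?_⟩
      have h1 : α ≤ Real.log (p i1) / Real.log (r i1) := le_trans hα.2 (ciSup_le hi1)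
      have h2 : (Real.log (p i1) / Real.log (r i1)) * q ≤ α * q :=
        mul_le_mul_of_nonpos_right h1 hq.le
      linarith
  have hrlog : Real.log (r i) < 0 := Real.log_neg (hr i).1 (hr i).2
  have h2 : (Real.log (p i) / Real.log (r i) * q + β q) * Real.log (r i)
      = Real.log (p i) * q + Real.log (r i) * β q := by
    have hne : Real.log (r i) ≠ 0 := hrlog.ne
    field_simp
  have hkey : 0 < Real.log (p i) * q + Real.log (r i) * β q := by
    have := mul_pos_of_neg_of_neg hi hrlog
    rwa [h2] at this
  have hterm : 1 < p i ^ q * r i ^ β q := by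
    rw [Real.rpow_def_of_pos (hp i).1, Real.rpow_def_of_pos (hr i).1, ← Real.exp_add]
    calc (1:ℝ) = Real.exp 0 := Real.exp_zero.symm
    _ < _ := Real.exp_lt_exp.mpr hkey
  have hsum : p i ^ q * r i ^ β q ≤ ∑ j, p j ^ q * r j ^ β q := by
    apply Finset.single_le_sum (f := fun j => p j ^ q * r j ^ β q)
    · intro j _
      exact le_of_lt (mul_pos (Real.rpow_pos_of_pos (hp j).1 q) (Real.rpow_pos_of_pos (hr j).1 (β q)))
    · exact Finset.mem_univ i
  rw [hβ q] at hsum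
  linarith
end

section
/- If α < α_min or α > α_max, where α_min = min_i (log p_i / log r_i) and α_max = max_i (log p_i / log r_i), then inf_q (αq + β(q)) = -∞, i.e., the function q ↦ αq + β(q) is unbounded below. -/
theorem legendre_unbounded_below_outside (N : ℕ) (hN : 1 ≤ N) (p r : Fin N → ℝ)
    (hp : ∀ i, p i ∈ Set.Ioo (0:ℝ) 1) (hpsum : ∑ i, p i = 1)
    (hr : ∀ i, r i ∈ Set.Ioo (0:ℝ) 1)
    (β : ℝ → ℝ) (hβ : ∀ q, ∑ i, p i ^ q * r i ^ β q = 1)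
    (α : ℝ)
    (hα : α < (⨅ i, Real.log (p i) / Real.log (r i)) ∨
      (⨆ i, Real.log (p i) / Real.log (r i)) < α) :
    ∀ M : ℝ, ∃ q : ℝ, α * q + β q < M := by
  have hNpos : (0:ℝ) < N := by
    have : (1:ℝ) ≤ N := by exact_mod_cast hN
    linarith
  haveI : Nonempty (Fin N) := Fin.pos_iff_nonempty.mp hN
  set C := ⨆ i, Real.log N / (-Real.log (r i)) with hCdef
  have hC : ∀ i, Real.log N / (-Real.log (r i)) ≤ C :=
    fun i => le_ciSup (f := fun j => Real.log N / (-Real.log (r j))) (Set.Finite.bddAbove (Set.finite_range _)) i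
  have key : ∀ q : ℝ, ∃ i, β q ≤ Real.log N / (-Real.log (r i))
      - q * (Real.log (p i) / Real.log (r i)) := by
    intro q
    obtain ⟨i, hi⟩ : ∃ i, (1:ℝ)/N ≤ p i ^ q * r i ^ β q := by
      by_contra h
      push_neg at h
      have hlt := Finset.sum_lt_sum_of_nonempty Finset.univ_nonempty
        (fun i _ => h i)
      rw [hβ q, Finset.sum_const, Finset.card_univ, Fintype.card_fin,
        nsmul_eq_mul, mul_one_div, div_self (ne_of_gt hNpos)] at hlt
      exact lt_irrefl _ hlt
    have hpi := hp i; have hri := hr i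
    have hlogr : Real.log (r i) < 0 := Real.log_neg hri.1 hri.2
    have hlog : -Real.log N ≤ q * Real.log (p i) + β q * Real.log (r i) := by
      have h1 : Real.log ((1:ℝ)/N) ≤ Real.log (p i ^ q * r i ^ β q) :=
        Real.log_le_log (by positivity) hi
      rw [Real.log_mul (ne_of_gt (Real.rpow_pos_of_pos hpi.1 _))
          (ne_of_gt (Real.rpow_pos_of_pos hri.1 _)),
        Real.log_rpow hpi.1, Real.log_rpow hri.1, one_div, Real.log_inv] at h1
      linarith
    refine ⟨i, ?_⟩
    have heq : Real.log N / (-Real.log (r i))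
        - q * (Real.log (p i) / Real.log (r i))
        = (Real.log N + q * Real.log (p i)) / (-Real.log (r i)) := by
      field_simp
      ring
    rw [heq, le_div_iff₀ (by linarith : (0:ℝ) < -Real.log (r i))]
    nlinarith [hlog]
  intro M
  rcases hα with hα | hα
  · set A := ⨅ i, Real.log (p i) / Real.log (r i) with hAdef
    have hD : α - A < 0 := by linarith
    obtain ⟨q, hq0, ht⟩ : ∃ q : ℝ, 0 < q ∧ (M - C)/(α - A) < q := by
      refine ⟨max 0 ((M - C)/(α - A)) + 1, ?_, ?_⟩
      · have := le_max_left 0 ((M - C)/(α - A)); linarith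
      · have := le_max_right 0 ((M - C)/(α - A)); linarith
    obtain ⟨i, hi⟩ := key q
    have hAi : A ≤ Real.log (p i) / Real.log (r i) :=
      ciInf_le (f := fun j => Real.log (p j) / Real.log (r j)) (Set.Finite.bddBelow (Set.finite_range _)) i
    have h2 : q * A ≤ q * (Real.log (p i) / Real.log (r i)) :=
      mul_le_mul_of_nonneg_left hAi (le_of_lt hq0)
    have h1 : α * q + β q ≤ C + q * (α - A) := by
      have hexp : q * (α - A) = q * α - q * A := by ring
      have hca : α * q = q * α := by ring
      linarith [hi, hC i, h2]
    have h3 : q * (α - A) < M - C := by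
      have h4 := mul_lt_mul_of_neg_right ht hD
      rwa [div_mul_cancel₀ _ (ne_of_lt hD)] at h4
    exact ⟨q, by linarith⟩
  · set S := ⨆ i, Real.log (p i) / Real.log (r i) with hSdef
    have hD : 0 < α - S := by linarith
    obtain ⟨q, hq0, ht⟩ : ∃ q : ℝ, q < 0 ∧ q < (M - C)/(α - S) := by
      refine ⟨min 0 ((M - C)/(α - S)) - 1, ?_, ?_⟩
      · have := min_le_left 0 ((M - C)/(α - S)); linarith
      · have := min_le_right 0 ((M - C)/(α - S)); linarith
    obtain ⟨i, hi⟩ := key q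
    have hSi : Real.log (p i) / Real.log (r i) ≤ S :=
      le_ciSup (f := fun j => Real.log (p j) / Real.log (r j)) (Set.Finite.bddAbove (Set.finite_range _)) i
    have h2 : q * S ≤ q * (Real.log (p i) / Real.log (r i)) :=
      mul_le_mul_of_nonpos_left hSi (le_of_lt hq0)
    have h1 : α * q + β q ≤ C + q * (α - S) := by
      have hexp : q * (α - S) = q * α - q * S := by ring
      have hca : α * q = q * α := by ring
      linarith [hi, hC i, h2]
    have h3 : q * (α - S) < M - C := by
      have h4 := mul_lt_mul_of_pos_right ht hD
      rwa [div_mul_cancel₀ _ (ne_of_gt hD)] at h4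
    exact ⟨q, by linarith⟩
end

section
/- Under the open set condition, there is a constant c_1 such that for every x ∈ K and 0 < r < 1, μ(B(x,r)) ≤ c_1 · max{ p_u : u ∈ Γ_r, S_u(K) ∩ B(x,r) ≠ ∅ }. -/
open Metric MeasureTheory Topology
open scoped NNReal ENNReal

/-- `S_u = S_{u_1} ∘ ⋯ ∘ S_{u_n}` for a finite word `u`. -/
def wordMap {N : ℕ} {E : Type*} (S : Fin N → E → E) : List (Fin N) → E → E
  | [] => id
  | i :: u => S i ∘ wordMap S u

/-- `p_u = p_{u_1} ⋯ p_{u_n}` for a finite word `u`. -/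
def wordProd {N : ℕ} (p : Fin N → ℝ) (u : List (Fin N)) : ℝ :=
  (u.map p).prod

/-!
Expanding the self-similarity relation `μ = ∑ pᵢ (Sᵢ)₊μ` down to the cut `Γ_ρ` gives
`μ(B(x, ρ)) ≤ ∑_{u ∈ Γ_ρ} p_u μ(S_u⁻¹ B(x, ρ))`. Since `μ` lives on `K`, only the words for which
`S_u(K)` meets the ball contribute, each at most `p_u`. These words have `r_u ≍ ρ` and, by the
open set condition, pairwise disjoint images `S_u(U)`; each image contains a ball of radius `≍ ρ`
lying in a ball of radius `≍ ρ` around `x`, so comparing volumes bounds their number by a constant.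
-/

open Set Filter Function Module
open scoped Classical

lemma sum_le_card_mul_biSup {ι : Type*} {P : ι → Prop} {f : ι → ℝ≥0∞} {G : Finset ι}
    (hG : ∀ u ∈ G, P u) : ∑ u ∈ G, f u ≤ G.card * ⨆ (u) (_ : P u), f u := by
  rw [← nsmul_eq_mul]
  exact Finset.sum_le_card_nsmul _ _ _ fun u hu => le_iSup₂_of_le u (hG u hu) le_rfl

lemma exists_forall_le_lt_one {ι : Type*} [Finite ι] {r : ι → ℝ} (hr : ∀ i, r i < 1) :
    ∃ c, 0 < c ∧ c < 1 ∧ ∀ i, r i ≤ c := by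
  have h : ∀ᶠ c in 𝓝[<] (1 : ℝ), 0 < c ∧ c < 1 ∧ ∀ i, r i ≤ c :=
    Eventually.and (nhdsWithin_le_nhds (eventually_gt_nhds one_pos)) <|
      Eventually.and self_mem_nhdsWithin <| eventually_all.2 fun i =>
        nhdsWithin_le_nhds <| (eventually_gt_nhds (hr i)).mono fun _ => le_of_lt
  exact h.exists

lemma exists_pos_forall_le {ι : Type*} [Finite ι] {r : ι → ℝ} (hr : ∀ i, 0 < r i) :
    ∃ m, 0 < m ∧ ∀ i, m ≤ r i := by
  have h : ∀ᶠ m in 𝓝[>] (0 : ℝ), 0 < m ∧ ∀ i, m ≤ r i :=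
    Eventually.and self_mem_nhdsWithin <| eventually_all.2 fun i =>
      nhdsWithin_le_nhds <| (eventually_lt_nhds (hr i)).mono fun _ => le_of_lt
  exact h.exists

section Words

variable {N : ℕ} {E : Type*} {S : Fin N → E → E} {r : Fin N → ℝ}

@[simp] lemma wordMap_nil : wordMap S [] = id := rfl

lemma wordMap_append (u v : List (Fin N)) :
    wordMap S (u ++ v) = wordMap S u ∘ wordMap S v := by
  induction u with
  | nil => rfl
  | cons i u ih => simp only [List.cons_append, wordMap, ih, comp_assoc]

@[simp] lemma wordProd_nil : wordProd r [] = 1 := rfl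

lemma wordProd_append (u v : List (Fin N)) :
    wordProd r (u ++ v) = wordProd r u * wordProd r v := by
  simp [wordProd]

@[simp] lemma wordProd_cons (i : Fin N) (u : List (Fin N)) :
    wordProd r (i :: u) = r i * wordProd r u := by
  simp [wordProd]

@[simp] lemma wordProd_singleton (i : Fin N) : wordProd r [i] = r i := by
  simp [wordProd]

lemma wordProd_nonneg (hr : ∀ i, 0 ≤ r i) (u : List (Fin N)) : 0 ≤ wordProd r u :=
  List.prod_nonneg fun _ hx => by
    obtain ⟨i, -, rfl⟩ := List.mem_map.1 hx
    exact hr i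

lemma wordProd_pos (hr : ∀ i, 0 < r i) (u : List (Fin N)) : 0 < wordProd r u :=
  List.prod_pos fun _ hx => by
    obtain ⟨i, -, rfl⟩ := List.mem_map.1 hx
    exact hr i

lemma wordProd_le_pow {c : ℝ} (hr : ∀ i, 0 ≤ r i) (hc : ∀ i, r i ≤ c) (u : List (Fin N)) :
    wordProd r u ≤ c ^ u.length := by
  induction u with
  | nil => simp
  | cons i u ih =>
    rw [wordProd_cons, List.length_cons, pow_succ']
    exact mul_le_mul (hc i) ih (wordProd_nonneg hr u) ((hr i).trans (hc i))

lemma wordProd_le_of_prefix (hr : ∀ i, r i ∈ Icc (0 : ℝ) 1) {u v : List (Fin N)}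
    (huv : u <+: v) : wordProd r v ≤ wordProd r u := by
  obtain ⟨t, rfl⟩ := huv
  rw [wordProd_append]
  refine mul_le_of_le_one_right (wordProd_nonneg (fun i => (hr i).1) u) ?_
  simpa using wordProd_le_pow (fun i => (hr i).1) (fun i => (hr i).2) t

lemma wordMap_image_subset {A : Set E} (hA : ∀ i, S i '' A ⊆ A) (u : List (Fin N)) :
    wordMap S u '' A ⊆ A := by
  induction u with
  | nil => simp
  | cons i u ih =>
    rw [wordMap, image_comp]
    exact (image_mono ih).trans (hA i)

lemma dist_wordMap [PseudoMetricSpace E] (hS : ∀ i x y, dist (S i x) (S i y) = r i * dist x y)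
    (u : List (Fin N)) (x y : E) :
    dist (wordMap S u x) (wordMap S u y) = wordProd r u * dist x y := by
  induction u with
  | nil => simp
  | cons i u ih => simp [wordMap, hS, ih, mul_assoc]

lemma measurable_wordMap [MeasurableSpace E] (hS : ∀ i, Measurable (S i)) (u : List (Fin N)) :
    Measurable (wordMap S u) := by
  induction u with
  | nil => exact measurable_id
  | cons i u ih => exact (hS i).comp ih

end Words

section PrefixCover

variable {α : Type*} [Fintype α] {w : List α → ℝ≥0∞}

lemma sum_sum_filter_concat_prefix_le (Γ : Finset (List α)) (t : List α) :
    ∑ i, ∑ u ∈ Γ with t ++ [i] <+: u, w u ≤ ∑ u ∈ Γ with t <+: u, w u := by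
  rw [← Finset.sum_biUnion]
  · refine Finset.sum_le_sum_of_subset fun u hu => ?_
    simp only [Finset.mem_biUnion, Finset.mem_filter, Finset.mem_univ, true_and] at hu ⊢
    obtain ⟨i, hu, hi⟩ := hu
    exact ⟨hu, (List.prefix_append t [i]).trans hi⟩
  · intro i _ j _ hij
    refine Finset.disjoint_filter.2 fun u _ hi hj => hij ?_
    simpa using List.prefix_of_prefix_length_le hi hj (by simp)

theorem le_sum_of_forall_exists_prefix (hw : ∀ t, w t = ∑ i, w (t ++ [i]))
    (Γ : Finset (List α)) {L : ℕ} (hΓ : ∀ s : List α, L ≤ s.length → ∃ u ∈ Γ, u <+: s) :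
    w [] ≤ ∑ u ∈ Γ, w u := by
  suffices key : ∀ m t, L ≤ t.length + m →
      (∀ s : List α, L ≤ t.length + s.length → ∃ u ∈ Γ, t <+: u ∧ u <+: t ++ s) →
      w t ≤ ∑ u ∈ Γ with t <+: u, w u by
    simpa using key L [] (by simp) (by simpa using hΓ)
  intro m
  induction m with
  | zero =>
    intro t hL ht
    obtain ⟨u, hu, htu, hut⟩ := ht [] (by simpa using hL)
    rw [List.append_nil] at hut
    rw [← htu.eq_of_length_le hut.length_le] at hu
    exact Finset.single_le_sum (f := w) (fun _ _ => zero_le)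
      (Finset.mem_filter.2 ⟨hu, List.prefix_refl t⟩)
  | succ m ih =>
    intro t hL ht
    by_cases htΓ : t ∈ Γ
    · exact Finset.single_le_sum (f := w) (fun _ _ => zero_le)
        (Finset.mem_filter.2 ⟨htΓ, List.prefix_refl t⟩)
    have hext : ∀ i, w (t ++ [i]) ≤ ∑ u ∈ Γ with t ++ [i] <+: u, w u := fun i =>
      ih (t ++ [i]) (by simp; omega) fun s hs => by
        obtain ⟨u, hu, htu, hut⟩ := ht (i :: s) (by simp at hs ⊢; omega)
        have hlen : t.length < u.length :=
          lt_of_le_of_ne htu.length_le fun h => htΓ (htu.eq_of_length h ▸ hu)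
        rw [← List.singleton_append, ← List.append_assoc] at hut
        exact ⟨u, hu, List.prefix_of_prefix_length_le (List.prefix_append _ _) hut
          (by simpa using hlen), hut⟩
    calc w t = ∑ i, w (t ++ [i]) := hw t
      _ ≤ ∑ i, ∑ u ∈ Γ with t ++ [i] <+: u, w u := Finset.sum_le_sum fun i _ => hext i
      _ ≤ ∑ u ∈ Γ with t <+: u, w u := sum_sum_filter_concat_prefix_le Γ t

end PrefixCover

lemma injective_of_dist_eq_mul {X : Type*} [MetricSpace X] {f : X → X} {c : ℝ} (hc : 0 < c)
    (hf : ∀ x y, dist (f x) (f y) = c * dist x y) : Injective f := fun x y h =>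
  dist_eq_zero.1 <| by simpa [h, hc.ne'] using (hf x y).symm

lemma lipschitzWith_of_dist_eq_mul {X : Type*} [PseudoMetricSpace X] {f : X → X} {c : ℝ}
    (hc : 0 ≤ c) (hf : ∀ x y, dist (f x) (f y) = c * dist x y) : LipschitzWith c.toNNReal f :=
  LipschitzWith.of_dist_le_mul fun x y => by rw [hf, Real.coe_toNNReal _ hc]

section Similarity

variable {E : Type*} [NormedAddCommGroup E] [NormedSpace ℝ E] {f : E → E} {c : ℝ}

/-- By Mazur–Ulam `c⁻¹ • f` is an affine isometry, hence onto in finite dimension. -/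
lemma surjective_of_dist_eq_mul [StrictConvexSpace ℝ E] [FiniteDimensional ℝ E] (hc : 0 < c)
    (hf : ∀ x y, dist (f x) (f y) = c * dist x y) : Surjective f := by
  have hg : Isometry fun x => c⁻¹ • f x := Isometry.of_dist_eq fun x y => by
    rw [dist_smul₀, hf, Real.norm_eq_abs, abs_of_pos (inv_pos.2 hc), inv_mul_cancel_left₀ hc.ne']
  let A := hg.affineIsometryOfStrictConvexSpace
  have hA : Surjective A := A.toAffineMap.linear_surjective_iff.1 <|
    LinearMap.injective_iff_surjective.1 A.linearIsometry.injective
  intro y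
  obtain ⟨x, hx⟩ := hA (c⁻¹ • y)
  exact ⟨x, smul_right_injective E (inv_ne_zero hc.ne') hx⟩

lemma image_ball_of_dist_eq_mul [StrictConvexSpace ℝ E] [FiniteDimensional ℝ E] (hc : 0 < c)
    (hf : ∀ x y, dist (f x) (f y) = c * dist x y) (z : E) (s : ℝ) :
    f '' ball z s = ball (f z) (c * s) := by
  ext y
  obtain ⟨x, rfl⟩ := surjective_of_dist_eq_mul hc hf y
  simp [(injective_of_dist_eq_mul hc hf).mem_set_image, hf, mul_lt_mul_iff_right₀ hc]

end Similarity

lemma infDist_le_mul_infDist {X : Type*} [MetricSpace X] {f : X → X} {c : ℝ} (hc : 0 < c)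
    (hf : ∀ x y, dist (f x) (f y) ≤ c * dist x y) {K : Set X} (hK : K.Nonempty)
    (hfK : f '' K ⊆ K) (x : X) : infDist (f x) K ≤ c * infDist x K := by
  rw [← div_le_iff₀' hc, le_infDist hK]
  intro y hy
  rw [div_le_iff₀' hc]
  exact (infDist_le_dist_of_mem (hfK (mem_image_of_mem f hy))).trans (hf x y)

section SelfSimilar

variable {ι X : Type*} [Fintype ι] [MeasurableSpace X] {S : ι → X → X} {p : ι → ℝ}
  {μ : Measure X}

lemma measure_eq_sum_preimage (hSm : ∀ i, Measurable (S i))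
    (hμ : μ = ∑ i, ENNReal.ofReal (p i) • μ.map (S i)) {B : Set X} (hB : MeasurableSet B) :
    μ B = ∑ i, ENNReal.ofReal (p i) * μ (S i ⁻¹' B) := by
  conv_lhs => rw [hμ]
  simp [Measure.map_apply (hSm _) hB]

lemma measure_le_of_forall_preimage_subset (hSm : ∀ i, Measurable (S i))
    (hp : ∀ i, 0 ≤ p i) (hpsum : ∑ i, p i = 1)
    (hμ : μ = ∑ i, ENNReal.ofReal (p i) • μ.map (S i)) {A A' : Set X} (hA : MeasurableSet A)
    (hAA' : ∀ i, S i ⁻¹' A ⊆ A') : μ A ≤ μ A' :=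
  calc μ A = ∑ i, ENNReal.ofReal (p i) * μ (S i ⁻¹' A) := measure_eq_sum_preimage hSm hμ hA
    _ ≤ ∑ i, ENNReal.ofReal (p i) * μ A' := by gcongr with i; exact hAA' i
    _ = μ A' := by
      rw [← Finset.sum_mul, ← ENNReal.ofReal_sum_of_nonneg fun i _ => hp i, hpsum,
        ENNReal.ofReal_one, one_mul]

variable [MetricSpace X] [OpensMeasurableSpace X] [IsFiniteMeasure μ]

/-- Dividing `ε` by the contraction ratio does not decrease the measure of the set, while
iterating the division pushes the set off to infinity. -/
lemma measure_setOf_le_infDist_eq_zero (hSm : ∀ i, Measurable (S i))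
    (hp : ∀ i, 0 ≤ p i) (hpsum : ∑ i, p i = 1)
    (hμ : μ = ∑ i, ENNReal.ofReal (p i) • μ.map (S i)) {c : ℝ} (hc0 : 0 < c) (hc1 : c < 1)
    (hS : ∀ i x y, dist (S i x) (S i y) ≤ c * dist x y) {K : Set X} (hKne : K.Nonempty)
    (hSK : ∀ i, S i '' K ⊆ K) {ε : ℝ} (hε : 0 < ε) : μ {x | ε ≤ infDist x K} = 0 := by
  set A : ℝ → Set X := fun ε => {x | ε ≤ infDist x K}
  have hAm : ∀ ε, MeasurableSet (A ε) := fun ε =>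
    measurableSet_le measurable_const (continuous_infDist_pt K).measurable
  have hstep : ∀ ε, μ (A ε) ≤ μ (A (ε / c)) := fun ε =>
    measure_le_of_forall_preimage_subset hSm hp hpsum hμ (hAm ε) fun i x hx => by
      simp only [A, mem_preimage, mem_ofPred_eq] at hx ⊢
      rw [div_le_iff₀' hc0]
      exact hx.trans (infDist_le_mul_infDist hc0 (hS i) hKne (hSK i) x)
  have hiter : ∀ n : ℕ, μ (A ε) ≤ μ (A (ε / c ^ n)) := fun n => by
    induction n with
    | zero => simp
    | succ n ih => exact ih.trans (by simpa [pow_succ, div_div] using hstep (ε / c ^ n))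
  have hanti : Antitone fun n : ℕ => A (ε / c ^ n) := fun m n hmn x hx =>
    le_trans (div_le_div_of_nonneg_left hε.le (pow_pos hc0 n)
      (pow_le_pow_of_le_one hc0.le hc1.le hmn)) hx
  have hempty : (⋂ n : ℕ, A (ε / c ^ n)) = ∅ := by
    refine eq_empty_of_forall_notMem fun x hx => ?_
    have hD : 0 < infDist x K + 1 := add_pos_of_nonneg_of_pos infDist_nonneg one_pos
    obtain ⟨n, hn⟩ := exists_pow_lt_of_lt_one (div_pos hε hD) hc1
    have hxn : ε / c ^ n ≤ infDist x K := mem_iInter.1 hx n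
    rw [lt_div_iff₀ hD] at hn
    rw [div_le_iff₀ (pow_pos hc0 n)] at hxn
    nlinarith [pow_pos hc0 n]
  refine le_antisymm ?_ zero_le
  calc μ (A ε) ≤ ⨅ n : ℕ, μ (A (ε / c ^ n)) := le_iInf hiter
    _ = 0 := by
      rw [← hanti.measure_iInter (fun n => (hAm _).nullMeasurableSet) ⟨0, measure_ne_top μ _⟩,
        hempty, measure_empty]

theorem measure_compl_eq_zero_of_selfSimilar (hSm : ∀ i, Measurable (S i))
    (hp : ∀ i, 0 ≤ p i) (hpsum : ∑ i, p i = 1)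
    (hμ : μ = ∑ i, ENNReal.ofReal (p i) • μ.map (S i)) {c : ℝ} (hc0 : 0 < c) (hc1 : c < 1)
    (hS : ∀ i x y, dist (S i x) (S i y) ≤ c * dist x y) {K : Set X} (hKc : IsClosed K)
    (hKne : K.Nonempty) (hSK : ∀ i, S i '' K ⊆ K) : μ Kᶜ = 0 := by
  refine measure_mono_null (fun x hx => ?_) <| measure_iUnion_null fun n : ℕ =>
    measure_setOf_le_infDist_eq_zero hSm hp hpsum hμ hc0 hc1 hS hKne hSK
      (Nat.one_div_pos_of_nat (n := n))
  obtain ⟨n, hn⟩ := exists_nat_one_div_lt ((hKc.notMem_iff_infDist_pos hKne).1 hx)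
  exact mem_iUnion.2 ⟨n, hn.le⟩

end SelfSimilar

section WordExpansion

variable {N : ℕ} {X : Type*} [MeasurableSpace X] {S : Fin N → X → X} {p : Fin N → ℝ}
  {μ : Measure X}

theorem measure_le_sum_preimage_wordMap (hSm : ∀ i, Measurable (S i)) (hp : ∀ i, 0 ≤ p i)
    (hμ : μ = ∑ i, ENNReal.ofReal (p i) • μ.map (S i)) {B : Set X} (hB : MeasurableSet B)
    (Γ : Finset (List (Fin N))) {L : ℕ}
    (hΓ : ∀ s : List (Fin N), L ≤ s.length → ∃ u ∈ Γ, u <+: s) :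
    μ B ≤ ∑ u ∈ Γ, ENNReal.ofReal (wordProd p u) * μ (wordMap S u ⁻¹' B) := by
  have hw : ∀ t : List (Fin N), ENNReal.ofReal (wordProd p t) * μ (wordMap S t ⁻¹' B) =
      ∑ i, ENNReal.ofReal (wordProd p (t ++ [i])) * μ (wordMap S (t ++ [i]) ⁻¹' B) := by
    intro t
    rw [measure_eq_sum_preimage hSm hμ (measurable_wordMap hSm t hB), Finset.mul_sum]
    refine Finset.sum_congr rfl fun i _ => ?_
    rw [wordProd_append, wordProd_singleton, ENNReal.ofReal_mul (wordProd_nonneg hp t),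
      wordMap_append, preimage_comp, mul_assoc]
    rfl
  simpa using le_sum_of_forall_exists_prefix hw Γ hΓ

theorem measure_le_sum_filter_wordProd [IsProbabilityMeasure μ] (hSm : ∀ i, Measurable (S i))
    (hp : ∀ i, 0 ≤ p i) (hμ : μ = ∑ i, ENNReal.ofReal (p i) • μ.map (S i)) {K : Set X}
    (hK : μ Kᶜ = 0) {B : Set X} (hB : MeasurableSet B) (Γ : Finset (List (Fin N))) {L : ℕ}
    (hΓ : ∀ s : List (Fin N), L ≤ s.length → ∃ u ∈ Γ, u <+: s) :
    μ B ≤ ∑ u ∈ Γ with (wordMap S u '' K ∩ B).Nonempty, ENNReal.ofReal (wordProd p u) := by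
  rw [Finset.sum_filter]
  refine (measure_le_sum_preimage_wordMap hSm hp hμ hB Γ hΓ).trans
    (Finset.sum_le_sum fun u _ => ?_)
  split_ifs with hit
  · exact mul_le_of_le_one_right' prob_le_one
  · have : μ (wordMap S u ⁻¹' B) = 0 :=
      measure_mono_null (fun y hy hyK => hit ⟨_, mem_image_of_mem _ hyK, hy⟩) hK
    rw [this, mul_zero]

end WordExpansion

/-- The paper's `Γ_ρ`. -/
def cutSet {N : ℕ} (r : Fin N → ℝ) (ρ : ℝ) : Set (List (Fin N)) :=
  {u | u ≠ [] ∧ wordProd r u < ρ ∧ ρ ≤ wordProd r u.dropLast}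

section Cut

variable {N : ℕ} {r : Fin N → ℝ} {ρ : ℝ}

lemma exists_length_wordProd_lt {c : ℝ} (hr : ∀ i, 0 ≤ r i) (hc : ∀ i, r i ≤ c) (hc0 : 0 ≤ c)
    (hc1 : c < 1) (hρ : 0 < ρ) : ∃ L : ℕ, ∀ u : List (Fin N), L ≤ u.length → wordProd r u < ρ := by
  obtain ⟨L, hL⟩ := exists_pow_lt_of_lt_one hρ hc1
  exact ⟨L, fun u hu =>
    ((wordProd_le_pow hr hc u).trans (pow_le_pow_of_le_one hc0 hc1.le hu)).trans_lt hL⟩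

lemma exists_prefix_mem_cutSet (hρ : ρ ≤ 1) {s : List (Fin N)} (hs : wordProd r s < ρ) :
    ∃ u ∈ cutSet r ρ, u <+: s := by
  induction s using List.reverseRecOn with
  | nil => exact absurd hρ (by simpa using hs)
  | append_singleton s i ih =>
    by_cases h : wordProd r s < ρ
    · obtain ⟨u, hu, hus⟩ := ih h
      exact ⟨u, hu, hus.trans (List.prefix_append _ _)⟩
    · exact ⟨s ++ [i], ⟨by simp, hs, by simpa using h⟩, List.prefix_refl _⟩

lemma cutSet_finite {L : ℕ} (hL : ∀ u : List (Fin N), L ≤ u.length → wordProd r u < ρ) :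
    (cutSet r ρ).Finite :=
  (List.finite_length_le (Fin N) L).subset fun u hu => by
    by_contra h
    simp only [mem_ofPred_eq, not_le] at h
    exact (hL u.dropLast (by simp; omega)).not_ge hu.2.2

lemma not_prefix_of_mem_cutSet (hr : ∀ i, r i ∈ Icc (0 : ℝ) 1) {u v : List (Fin N)}
    (hu : u ∈ cutSet r ρ) (hv : v ∈ cutSet r ρ) (huv : u ≠ v) : ¬ u <+: v := by
  obtain ⟨v, i, rfl⟩ := (List.eq_nil_or_concat' v).resolve_left hv.1
  intro h
  rcases List.prefix_concat_iff.1 h with rfl | h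
  · exact huv rfl
  · have hρv : ρ ≤ wordProd r v := by simpa using hv.2.2
    linarith [hu.2.1, wordProd_le_of_prefix hr h]

lemma mul_le_wordProd_of_mem_cutSet {m : ℝ} (hm : 0 ≤ m) (hmr : ∀ i, m ≤ r i)
    {u : List (Fin N)} (hu : u ∈ cutSet r ρ) : ρ * m ≤ wordProd r u := by
  obtain ⟨v, i, rfl⟩ := (List.eq_nil_or_concat' u).resolve_left hu.1
  have hρv : ρ ≤ wordProd r v := by simpa using hu.2.2
  rw [wordProd_append, wordProd_singleton]
  exact mul_le_mul hρv (hmr i) hm (wordProd_nonneg (fun j => hm.trans (hmr j)) v)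

end Cut

lemma disjoint_image_wordMap {N : ℕ} {X : Type*} {S : Fin N → X → X} {U : Set X}
    (hinj : ∀ i, Injective (S i)) (hUsub : ∀ i, S i '' U ⊆ U)
    (hUdisj : Pairwise fun i j : Fin N => Disjoint (S i '' U) (S j '' U)) :
    ∀ {u v : List (Fin N)}, ¬ u <+: v → ¬ v <+: u →
      Disjoint (wordMap S u '' U) (wordMap S v '' U)
  | [], _, huv, _ => absurd List.nil_prefix huv
  | _, [], _, hvu => absurd List.nil_prefix hvu
  | i :: u, j :: v, huv, hvu => by
    simp only [wordMap, image_comp]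
    by_cases hij : i = j
    · subst hij
      simp only [List.cons_prefix_cons, true_and] at huv hvu
      exact (disjoint_image_iff (hinj i)).2 (disjoint_image_wordMap hinj hUsub hUdisj huv hvu)
    · exact (hUdisj hij).mono (image_mono (wordMap_image_subset hUsub u))
        (image_mono (wordMap_image_subset hUsub v))

theorem card_le_of_pairwiseDisjoint_ball {E : Type*} [NormedAddCommGroup E] [NormedSpace ℝ E]
    [FiniteDimensional ℝ E] [MeasurableSpace E] [BorelSpace E] {ι : Type*} {F : Finset ι}
    {c : ι → E} {x : E} {s R : ℝ} (hs : 0 < s) (hF : (F : Set ι).PairwiseDisjoint fun j => ball (c j) s)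
    (hFR : ∀ j ∈ F, ball (c j) s ⊆ ball x R) :
    (F.card : ℝ≥0∞) ≤ ENNReal.ofReal ((R / s) ^ finrank ℝ E) := by
  rcases F.eq_empty_or_nonempty with rfl | ⟨j, hj⟩
  · simp
  have hR : 0 < R := pos_of_mem_ball (hFR j hj (mem_ball_self hs))
  set μ : Measure E := Measure.addHaar
  have hV0 : μ (ball 0 1) ≠ 0 := (measure_ball_pos μ 0 one_pos).ne'
  have hVtop : μ (ball 0 1) ≠ ∞ := measure_ball_lt_top.ne
  have hvol : (F.card : ℝ≥0∞) * ENNReal.ofReal (s ^ finrank ℝ E) * μ (ball 0 1) ≤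
      ENNReal.ofReal (R ^ finrank ℝ E) * μ (ball 0 1) :=
    calc (F.card : ℝ≥0∞) * ENNReal.ofReal (s ^ finrank ℝ E) * μ (ball 0 1)
        = ∑ j ∈ F, μ (ball (c j) s) := by
          simp [Measure.addHaar_ball_of_pos μ _ hs, mul_assoc]
      _ = μ (⋃ j ∈ F, ball (c j) s) :=
          (measure_biUnion_finset hF fun _ _ => measurableSet_ball).symm
      _ ≤ μ (ball x R) := measure_mono (iUnion₂_subset hFR)
      _ = ENNReal.ofReal (R ^ finrank ℝ E) * μ (ball 0 1) := Measure.addHaar_ball_of_pos μ x hR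
  rw [div_pow, ENNReal.ofReal_div_of_pos (by positivity),
    ENNReal.le_div_iff_mul_le (Or.inl (by positivity)) (Or.inl ENNReal.ofReal_ne_top)]
  exact (ENNReal.mul_le_mul_iff_left hV0 hVtop).1 hvol

theorem card_le_of_forall_mem_cutSet {E : Type*} [NormedAddCommGroup E] [NormedSpace ℝ E]
    [StrictConvexSpace ℝ E] [FiniteDimensional ℝ E] [MeasurableSpace E] [BorelSpace E] {N : ℕ}
    {S : Fin N → E → E} {r : Fin N → ℝ} (hS : ∀ i x y, dist (S i x) (S i y) = r i * dist x y)
    {m : ℝ} (hm : 0 < m) (hmr : ∀ i, m ≤ r i) (hr1 : ∀ i, r i ≤ 1) {U : Set E}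
    (hUsub : ∀ i, S i '' U ⊆ U)
    (hUdisj : Pairwise fun i j : Fin N => Disjoint (S i '' U) (S j '' U)) {z : E} {a : ℝ}
    (ha : 0 < a) (hzU : ball z a ⊆ U) {K : Set E} {R : ℝ} (hR : 0 ≤ R)
    (hKR : K ⊆ closedBall z R) {x : E} {ρ : ℝ} (hρ : 0 < ρ) {G : Finset (List (Fin N))}
    (hG : ∀ u ∈ G, u ∈ cutSet r ρ ∧ (wordMap S u '' K ∩ ball x ρ).Nonempty) :
    (G.card : ℝ≥0∞) ≤ ENNReal.ofReal (((R + a + 1) / (m * a)) ^ finrank ℝ E) := by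
  have hr0 : ∀ i, 0 < r i := fun i => hm.trans_le (hmr i)
  have hsmall : ∀ u ∈ G,
      ball (wordMap S u z) (ρ * m * a) ⊆ ball (wordMap S u z) (wordProd r u * a) :=
    fun u hu => ball_subset_ball <| mul_le_mul_of_nonneg_right
      (mul_le_wordProd_of_mem_cutSet hm.le hmr (hG u hu).1) ha.le
  have hdisj : (G : Set (List (Fin N))).PairwiseDisjoint
      fun u => ball (wordMap S u z) (ρ * m * a) := by
    have hr : ∀ i, r i ∈ Icc (0 : ℝ) 1 := fun i => ⟨(hr0 i).le, hr1 i⟩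
    have hU : ∀ u ∈ G, ball (wordMap S u z) (ρ * m * a) ⊆ wordMap S u '' U := fun u hu => by
      refine (hsmall u hu).trans ?_
      rw [← image_ball_of_dist_eq_mul (wordProd_pos hr0 u) (dist_wordMap hS u)]
      exact image_mono hzU
    intro u hu v hv huv
    exact (disjoint_image_wordMap (fun i => injective_of_dist_eq_mul (hr0 i) (hS i)) hUsub hUdisj
      (not_prefix_of_mem_cutSet hr (hG u hu).1 (hG v hv).1 huv)
      (not_prefix_of_mem_cutSet hr (hG v hv).1 (hG u hu).1 huv.symm)).mono (hU u hu) (hU v hv)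
  have hnear : ∀ u ∈ G, ball (wordMap S u z) (ρ * m * a) ⊆ ball x (ρ * (R + a + 1)) := by
    intro u hu y hy
    obtain ⟨hcut, _, ⟨k, hk, rfl⟩, hkx⟩ := hG u hu
    have hyz : dist y (wordMap S u z) < ρ * a :=
      (mem_ball.1 (hsmall u hu hy)).trans (mul_lt_mul_of_pos_right hcut.2.1 ha)
    have hzk : dist (wordMap S u z) (wordMap S u k) ≤ ρ * R := by
      rw [dist_wordMap hS]
      exact mul_le_mul hcut.2.1.le (mem_closedBall'.1 (hKR hk)) dist_nonneg hρ.le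
    rw [mem_ball] at hkx ⊢
    linarith [dist_triangle4 y (wordMap S u z) (wordMap S u k) x]
  convert card_le_of_pairwiseDisjoint_ball (by positivity) hdisj hnear using 3
  field_simp

theorem measure_ball_le_max_word_weight_general (N d : ℕ)
    (S : Fin N → EuclideanSpace ℝ (Fin d) → EuclideanSpace ℝ (Fin d))
    (r p : Fin N → ℝ) (hr : ∀ i, r i ∈ Set.Ioo (0:ℝ) 1)
    (hS : ∀ i x y, dist (S i x) (S i y) = r i * dist x y)
    (hp : ∀ i, 0 < p i) (hpsum : ∑ i, p i = 1)
    (K : Set (EuclideanSpace ℝ (Fin d))) (hKne : K.Nonempty) (hKc : IsCompact K)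
    (hK : K = ⋃ i, S i '' K)
    (μ : Measure (EuclideanSpace ℝ (Fin d))) [IsProbabilityMeasure μ]
    (hμ : μ = ∑ i, ENNReal.ofReal (p i) • μ.map (S i))
    -- open set condition
    (U : Set (EuclideanSpace ℝ (Fin d))) (hUo : IsOpen U) (hUne : U.Nonempty)
    (hUsub : ∀ i, S i '' U ⊆ U)
    (hUdisj : Pairwise fun i j : Fin N => Disjoint (S i '' U) (S j '' U)) :
    ∃ c₁ : ℝ≥0, ∀ x ∈ K, ∀ ρ : ℝ, 0 < ρ → ρ < 1 →
      μ (ball x ρ) ≤ (c₁ : ℝ≥0∞) *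
        ⨆ (u : List (Fin N)) (_ : u ≠ [] ∧ wordProd r u < ρ ∧
            ρ ≤ wordProd r u.dropLast ∧ (wordMap S u '' K ∩ ball x ρ).Nonempty),
          ENNReal.ofReal (wordProd p u) := by
  obtain ⟨c, hc0, hc1, hrc⟩ := exists_forall_le_lt_one fun i => (hr i).2
  obtain ⟨m, hm, hmr⟩ := exists_pos_forall_le fun i => (hr i).1
  have hSm : ∀ i, Measurable (S i) := fun i =>
    (lipschitzWith_of_dist_eq_mul (hr i).1.le (hS i)).continuous.measurable
  have hKnull : μ Kᶜ = 0 := measure_compl_eq_zero_of_selfSimilar hSm (fun i => (hp i).le) hpsum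
    hμ hc0 hc1 (fun i x y => (hS i x y).trans_le (mul_le_mul_of_nonneg_right (hrc i) dist_nonneg))
    hKc.isClosed hKne fun i => (subset_iUnion (fun j => S j '' K) i).trans hK.symm.subset
  obtain ⟨z, hzU⟩ := hUne
  obtain ⟨a, ha, hzaU⟩ := Metric.isOpen_iff.1 hUo z hzU
  obtain ⟨R, hR, hKR⟩ := hKc.isBounded.subset_closedBall_lt 0 z
  refine ⟨(((R + a + 1) / (m * a)) ^ d).toNNReal, fun x _ ρ hρ hρ1 => ?_⟩
  obtain ⟨L, hL⟩ := exists_length_wordProd_lt (fun i => (hr i).1.le) hrc hc0.le hc1 hρ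
  set G := (cutSet_finite hL).toFinset.filter fun u => (wordMap S u '' K ∩ ball x ρ).Nonempty
  have hG : ∀ u ∈ G, u ∈ cutSet r ρ ∧ (wordMap S u '' K ∩ ball x ρ).Nonempty := by simp [G]
  have hcard : (G.card : ℝ≥0∞) ≤ ENNReal.ofReal (((R + a + 1) / (m * a)) ^ d) := by
    simpa only [finrank_euclideanSpace_fin] using card_le_of_forall_mem_cutSet hS hm hmr
      (fun i => (hr i).2.le) hUsub hUdisj ha hzaU hR.le hKR hρ hG
  refine (measure_le_sum_filter_wordProd hSm (fun i => (hp i).le) hμ hKnull measurableSet_ball _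
    fun s hs => by simpa using exists_prefix_mem_cutSet hρ1.le (hL s hs)).trans <|
      (sum_le_card_mul_biSup fun u hu => ?_).trans (mul_le_mul_left hcard _)
  obtain ⟨⟨hne, hlt, hle⟩, hit⟩ := hG u hu
  exact ⟨hne, hlt, hle, hit⟩

theorem measure_ball_le_max_word_weight (N d : ℕ) (hN : 1 ≤ N)
    (S : Fin N → EuclideanSpace ℝ (Fin d) → EuclideanSpace ℝ (Fin d))
    (r p : Fin N → ℝ) (hr : ∀ i, r i ∈ Set.Ioo (0:ℝ) 1)
    (hS : ∀ i x y, dist (S i x) (S i y) = r i * dist x y)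
    (hp : ∀ i, 0 < p i) (hpsum : ∑ i, p i = 1)
    (K : Set (EuclideanSpace ℝ (Fin d))) (hKne : K.Nonempty) (hKc : IsCompact K)
    (hK : K = ⋃ i, S i '' K)
    (μ : Measure (EuclideanSpace ℝ (Fin d))) [IsProbabilityMeasure μ]
    (hμ : μ = ∑ i, ENNReal.ofReal (p i) • μ.map (S i))
    -- open set condition
    (U : Set (EuclideanSpace ℝ (Fin d))) (hUo : IsOpen U) (hUne : U.Nonempty)
    (hUb : Bornology.IsBounded U) (hUsub : ∀ i, S i '' U ⊆ U)
    (hUdisj : Pairwise fun i j : Fin N => Disjoint (S i '' U) (S j '' U)) :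
    ∃ c₁ : ℝ≥0, ∀ x ∈ K, ∀ ρ : ℝ, 0 < ρ → ρ < 1 →
      μ (ball x ρ) ≤ (c₁ : ℝ≥0∞) *
        ⨆ (u : List (Fin N)) (_ : u ≠ [] ∧ wordProd r u < ρ ∧
            ρ ≤ wordProd r u.dropLast ∧ (wordMap S u '' K ∩ ball x ρ).Nonempty),
          ENNReal.ofReal (wordProd p u) :=
  measure_ball_le_max_word_weight_general N d S r p hr hS hp hpsum K hKne hKc hK μ hμ U hUo hUne
    hUsub hUdisj
end
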